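/- (Classical choice of generators.) For n = 2, the Σ_2-submodule of M_2 generated by t̂_2 := (1,2) − (2,1) equals Kr(2). For every n ≥ 3, the Σ_n-submodule of M_n generated by the two elements r̂_n := (n−2,n) − (n−1,n) and t̂_n := (n−1,n) − (n,n−1) (i.e. the ℝ-linear span of their Σ_n-orbits) equals the augmentation kernel Kr(n) = ker ε. -/

import Mathlib

noncomputable section

/- Common setup: `Pn n` is the set of ordered pairs of distinct elements of `Fin n`,
`Mn n` the real vector space of finitely supported real functions on `Pn n`, with the
`Σ_n`-action `π • (i,j) = (π i, π j)`, and `eps` the augmentation sending every basis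
vector to `1`; `Kr(n) = ker eps`. -/

/-- Ordered pairs of distinct elements of `{1,…,n}`. -/
abbrev Pn (n : ℕ) := {p : Fin n × Fin n // p.1 ≠ p.2}

/-- The vector space `M_n` of finitely supported real functions on `Pn n`. -/
abbrev Mn (n : ℕ) := Pn n →₀ ℝ

/-- The basis vector of `Mn n` corresponding to a pair `(i,j)`. -/
def bv {n : ℕ} (p : Pn n) : Mn n := Finsupp.single p 1

/-- The linear action of `π ∈ Σ_n` on `M_n`, `π • (i,j) = (π i, π j)`. -/
def act {n : ℕ} (π : Equiv.Perm (Fin n)) : Mn n →ₗ[ℝ] Mn n :=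
  Finsupp.lmapDomain ℝ ℝ fun p => ⟨(π p.1.1, π p.1.2), fun h => p.2 (π.injective h)⟩

/-- The augmentation `ε : M_n → ℝ` sending every basis vector to `1`. -/
def eps (n : ℕ) : Mn n →ₗ[ℝ] ℝ := Finsupp.lsum ℝ fun _ => LinearMap.id

/-- The element `n` of `{1,…,n}` (1-indexed). -/
def q1 {n : ℕ} (_h : 2 ≤ n) : Fin n := ⟨n - 1, by omega⟩
/-- The element `n-1` of `{1,…,n}` (1-indexed). -/
def q2 {n : ℕ} (_h : 2 ≤ n) : Fin n := ⟨n - 2, by omega⟩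
/-- The element `n-2` of `{1,…,n}` (1-indexed). -/
def q3 {n : ℕ} (_h : 3 ≤ n) : Fin n := ⟨n - 3, by omega⟩
/-- The element `n-3` of `{1,…,n}` (1-indexed). -/
def q4 {n : ℕ} (_h : 4 ≤ n) : Fin n := ⟨n - 4, by omega⟩

/-- `t̂_n := (n−1,n) − (n,n−1)`. -/
def tHat {n : ℕ} (h : 2 ≤ n) : Mn n :=
  bv ⟨(q2 h, q1 h), Fin.ne_of_val_ne (show n - 2 ≠ n - 1 by omega)⟩
    - bv ⟨(q1 h, q2 h), Fin.ne_of_val_ne (show n - 1 ≠ n - 2 by omega)⟩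

/-- `r̂_n := (n−2,n) − (n−1,n)`. -/
def rHat {n : ℕ} (h : 3 ≤ n) : Mn n :=
  bv ⟨(q3 h, q1 (by omega)), Fin.ne_of_val_ne (show n - 3 ≠ n - 1 by omega)⟩
    - bv ⟨(q2 (by omega), q1 (by omega)), Fin.ne_of_val_ne (show n - 2 ≠ n - 1 by omega)⟩

/-- `l̂_n := 6·(n−1,n) − Σ_{(a,b)} (a,b)`, the sum over all six ordered pairs of distinct
elements of `{n−2, n−1, n}`. -/
def lHat {n : ℕ} (h : 3 ≤ n) : Mn n :=
  (6 : ℝ) • bv ⟨(q2 (by omega), q1 (by omega)),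
      Fin.ne_of_val_ne (show n - 2 ≠ n - 1 by omega)⟩
    - (bv ⟨(q3 h, q2 (by omega)), Fin.ne_of_val_ne (show n - 3 ≠ n - 2 by omega)⟩
      + bv ⟨(q2 (by omega), q3 h), Fin.ne_of_val_ne (show n - 2 ≠ n - 3 by omega)⟩
      + bv ⟨(q3 h, q1 (by omega)), Fin.ne_of_val_ne (show n - 3 ≠ n - 1 by omega)⟩
      + bv ⟨(q1 (by omega), q3 h), Fin.ne_of_val_ne (show n - 1 ≠ n - 3 by omega)⟩
      + bv ⟨(q2 (by omega), q1 (by omega)), Fin.ne_of_val_ne (show n - 2 ≠ n - 1 by omega)⟩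
      + bv ⟨(q1 (by omega), q2 (by omega)), Fin.ne_of_val_ne (show n - 1 ≠ n - 2 by omega)⟩)

/-! An element of `ker ε` is a combination of differences `(i,j) − (k,l)` of basis vectors, so it
suffices to reach every such difference. The `Σ_n`-orbit of `r̂_n` gives all moves
`(x,z) − (y,z)` and that of `t̂_n` all transpositions `(y,z) − (z,y)`; any two pairs are joined by
such moves once `n ≥ 3` leaves room for a third point. For `n = 2` the two pairs differ by `±t̂_2`. -/

theorem Finsupp.ker_lsum_id_le {α R : Type*} [CommRing R] {K : Submodule R (α →₀ R)}
    (hK : ∀ a b, single a 1 - single b 1 ∈ K) :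
    LinearMap.ker (lsum R fun _ : α => LinearMap.id) ≤ K := by
  rcases isEmpty_or_nonempty α with hα | ⟨⟨a₀⟩⟩
  · intro f _
    simp [Subsingleton.elim f 0]
  · -- `f ↦ f − ε(f) • single a₀ 1` is linear and maps every `single a r` into `K`
    have key : ∀ f : α →₀ R,
        f - (lsum R fun _ : α => (LinearMap.id : R →ₗ[R] R)) f • single a₀ 1 ∈ K := by
      intro f
      induction f using Finsupp.induction_linear with
      | zero => simp
      | add f g hf hg =>
        convert add_mem hf hg using 1
        rw [map_add, add_smul]
        abel
      | single a r =>
        convert K.smul_mem r (hK a a₀) using 1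
        simp [smul_sub]
    intro f hf
    simpa [LinearMap.mem_ker.mp hf] using key f

theorem Equiv.Perm.exists_apply_eq_two {β : Type*} {a b x y : β} (hab : a ≠ b) (hxy : x ≠ y) :
    ∃ σ : Perm β, σ a = x ∧ σ b = y := by
  obtain ⟨σ, hσ⟩ := exists_extending_pair ![a, b] ![x, y]
    (by intro i j; fin_cases i <;> fin_cases j <;> simp [hab, hab.symm])
    (by intro i j; fin_cases i <;> fin_cases j <;> simp [hxy, hxy.symm])
  exact ⟨σ, hσ 0, hσ 1⟩

theorem Equiv.Perm.exists_apply_eq_three {β : Type*} {a b c x y z : β}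
    (hab : a ≠ b) (hac : a ≠ c) (hbc : b ≠ c) (hxy : x ≠ y) (hxz : x ≠ z) (hyz : y ≠ z) :
    ∃ σ : Perm β, σ a = x ∧ σ b = y ∧ σ c = z := by
  obtain ⟨σ, hσ⟩ := exists_extending_pair ![a, b, c] ![x, y, z]
    (by intro i j; fin_cases i <;> fin_cases j <;> simp [*, Ne.symm])
    (by intro i j; fin_cases i <;> fin_cases j <;> simp [*, Ne.symm])
  exact ⟨σ, hσ 0, hσ 1, hσ 2⟩

section

variable {n : ℕ}

theorem act_bv (π : Equiv.Perm (Fin n)) {i j : Fin n} (hij : i ≠ j) :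
    act π (bv ⟨(i, j), hij⟩) = bv ⟨(π i, π j), π.injective.ne hij⟩ := by
  simp [act, bv]

theorem eps_bv (p : Pn n) : eps n (bv p) = 1 := by
  simp [eps, bv]

theorem eps_act (π : Equiv.Perm (Fin n)) (f : Mn n) : eps n (act π f) = eps n f :=
  Finsupp.sum_mapDomain_index (fun _ => rfl) fun _ _ _ => rfl

theorem span_eq_ker_eps {S : Set (Mn n)} (hS : S ⊆ LinearMap.ker (eps n))
    (hmoves : ∀ p q : Pn n, bv p - bv q ∈ Submodule.span ℝ S) :
    Submodule.span ℝ S = LinearMap.ker (eps n) :=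
  le_antisymm (Submodule.span_le.mpr hS) (Finsupp.ker_lsum_id_le hmoves)

theorem bv_sub_bv_mem_of_moves {K : Submodule ℝ (Mn n)}
    (hfst : ∀ {x y z : Fin n}, x ≠ y → ∀ (hxz : x ≠ z) (hyz : y ≠ z),
      bv ⟨(x, z), hxz⟩ - bv ⟨(y, z), hyz⟩ ∈ K)
    (hswap : ∀ {y z : Fin n} (hyz : y ≠ z), bv ⟨(y, z), hyz⟩ - bv ⟨(z, y), hyz.symm⟩ ∈ K)
    (p q : Pn n) : bv p - bv q ∈ K := by
  have fst : ∀ {x y z : Fin n} (hxz : x ≠ z) (hyz : y ≠ z),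
      bv ⟨(x, z), hxz⟩ - bv ⟨(y, z), hyz⟩ ∈ K := by
    intro x y z hxz hyz
    by_cases hxy : x = y
    · subst hxy; simp
    · exact hfst hxy hxz hyz
  -- `(z,x) → (x,z) → (y,z) → (z,y)` changes the second entry
  have snd : ∀ {x y z : Fin n} (hzx : z ≠ x) (hzy : z ≠ y),
      bv ⟨(z, x), hzx⟩ - bv ⟨(z, y), hzy⟩ ∈ K := by
    intro x y z hzx hzy
    have := add_mem (add_mem (hswap hzx) (fst hzx.symm hzy.symm)) (hswap hzy.symm)
    convert this using 1
    abel
  obtain ⟨⟨i, j⟩, hij⟩ := p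
  obtain ⟨⟨k, l⟩, hkl⟩ := q
  -- `(i,j) → (j,i) → (k,i)` if `i = l`, and `(i,j) → (i,l) → (k,l)` otherwise
  by_cases hil : i = l
  · subst hil
    convert add_mem (hswap hij) (fst hij.symm hkl) using 1
    abel
  · convert add_mem (snd hij hil) (fst hil hkl) using 1
    abel

theorem bv_sub_bv_swap_mem_span (h : 2 ≤ n) {S : Set (Mn n)}
    (hS : ∀ π : Equiv.Perm (Fin n), act π (tHat h) ∈ S) {y z : Fin n} (hyz : y ≠ z) :
    bv ⟨(y, z), hyz⟩ - bv ⟨(z, y), hyz.symm⟩ ∈ Submodule.span ℝ S := by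
  obtain ⟨π, hπy, hπz⟩ := Equiv.Perm.exists_apply_eq_two
    (Fin.ne_of_val_ne (show n - 2 ≠ n - 1 by omega) : q2 h ≠ q1 h) hyz
  have hact : act π (tHat h) = bv ⟨(y, z), hyz⟩ - bv ⟨(z, y), hyz.symm⟩ := by
    simp only [tHat, map_sub, act_bv, hπy, hπz]
  exact hact ▸ Submodule.subset_span (hS π)

theorem bv_sub_bv_same_snd_mem_span (h : 3 ≤ n) {S : Set (Mn n)}
    (hS : ∀ π : Equiv.Perm (Fin n), act π (rHat h) ∈ S) {x y z : Fin n}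
    (hxy : x ≠ y) (hxz : x ≠ z) (hyz : y ≠ z) :
    bv ⟨(x, z), hxz⟩ - bv ⟨(y, z), hyz⟩ ∈ Submodule.span ℝ S := by
  obtain ⟨π, hπx, hπy, hπz⟩ := Equiv.Perm.exists_apply_eq_three
    (Fin.ne_of_val_ne (show n - 3 ≠ n - 2 by omega) : q3 h ≠ q2 (by omega))
    (Fin.ne_of_val_ne (show n - 3 ≠ n - 1 by omega) : q3 h ≠ q1 (by omega))
    (Fin.ne_of_val_ne (show n - 2 ≠ n - 1 by omega) : q2 (by omega) ≠ q1 (by omega : 2 ≤ n))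
    hxy hxz hyz
  have hact : act π (rHat h) = bv ⟨(x, z), hxz⟩ - bv ⟨(y, z), hyz⟩ := by
    simp only [rHat, map_sub, act_bv, hπx, hπy, hπz]
  exact hact ▸ Submodule.subset_span (hS π)

theorem eps_tHat (h : 2 ≤ n) : eps n (tHat h) = 0 := by
  simp [tHat, eps_bv]

theorem eps_rHat (h : 3 ≤ n) : eps n (rHat h) = 0 := by
  simp [rHat, eps_bv]

end

theorem pn_two_eq_or_eq_swap {y z : Fin 2} (hyz : y ≠ z) (q : Pn 2) :
    q = ⟨(y, z), hyz⟩ ∨ q = ⟨(z, y), hyz.symm⟩ := by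
  revert y z q; decide

/-- classical choice of generators: the `Σ_2`-submodule of `M_2` generated by
`t̂_2` equals `Kr(2) = ker ε`, and for every `n ≥ 3` the `Σ_n`-submodule of `M_n` generated
by `r̂_n` and `t̂_n` equals `Kr(n) = ker ε`. -/
theorem statement4 :
    (Submodule.span ℝ
        {x : Mn 2 | ∃ π : Equiv.Perm (Fin 2), x = act π (tHat (by norm_num))}
      = LinearMap.ker (eps 2))
    ∧ ∀ n : ℕ, ∀ h : 3 ≤ n,
        Submodule.span ℝ
          {x : Mn n | ∃ π : Equiv.Perm (Fin n),
            x = act π (rHat h) ∨ x = act π (tHat (by omega))}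
        = LinearMap.ker (eps n) := by
  refine ⟨?_, fun n h => ?_⟩
  · refine span_eq_ker_eps ?_ fun p q => ?_
    · rintro _ ⟨π, rfl⟩
      simp [LinearMap.mem_ker, eps_act, eps_tHat]
    · obtain ⟨⟨y, z⟩, hyz⟩ := p
      rcases pn_two_eq_or_eq_swap hyz q with rfl | rfl
      · simp
      · exact bv_sub_bv_swap_mem_span _ (fun π => by exact ⟨π, rfl⟩) hyz
  · refine span_eq_ker_eps ?_ (bv_sub_bv_mem_of_moves ?_ ?_)
    · rintro _ ⟨π, rfl | rfl⟩ <;> simp [LinearMap.mem_ker, eps_act, eps_rHat, eps_tHat]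
    · exact bv_sub_bv_same_snd_mem_span h fun π => by exact ⟨π, .inl rfl⟩
    · exact bv_sub_bv_swap_mem_span _ fun π => by exact ⟨π, .inr rfl⟩
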